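/- Let X be a random variable with survival function P(X > t) = dexp(-μt; -μτ) for t ≥ 0, where 0 < μτ < 1/e. Then the moment generating function of X is M_X(s) = 1/(1 - μ^{-1} s e^{-sτ}) for s in a neighbourhood of 0 where the expression is defined. -/

import Mathlib

open Real Set MeasureTheory

noncomputable def dexp (μ τ t : ℝ) : ℝ :=
  ∑' n : ℕ, (-μ) ^ n * (t - n * τ) ^ n / (Nat.factorial n) * (if (n : ℝ) * τ ≤ t then 1 else 0)

/-!
`F = dexp μ τ` vanishes on `(-∞, 0)`, equals `1` at `0`, is continuous on `[0, ∞)` and, being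
locally a finite sum of truncated powers, has right derivative `-μ F(t - τ)` everywhere.
Since `μτ < 1/e`, the characteristic equation `r e^{-rτ} = μ` has a root `r ≥ 0`, and the
method of steps shows that `e^{rt} F(t)` is nondecreasing. Hence `F ≥ 0`, so `F` is
nonincreasing, so `e^{μt} F(t)` is nonincreasing on `[τ, ∞)`: `F(t) ≤ e^{μ(τ - t)}`.

For `s < μ` the Laplace integral `L = ∫₀^∞ e^{st} F(t) dt` therefore converges. Integrating
`(e^{st} F)' = s e^{st} F - e^{st} μ F(· - τ)` gives `M = 1 + s L` for the moment generating
function `M`, while the substitution `t ↦ t - τ` gives `M = μ e^{sτ} L`; eliminating `L` yields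
`M = 1 / (1 - μ⁻¹ s e^{-sτ})`.
-/

open Filter Topology

theorem monotoneOn_Icc_of_hasDerivWithinAt_Ici {f f' : ℝ → ℝ} {a b : ℝ}
    (hf : ContinuousOn f (Icc a b))
    (hf' : ∀ x ∈ Ico a b, HasDerivWithinAt f (f' x) (Ici x) x)
    (hf'₀ : ∀ x ∈ Ico a b, 0 ≤ f' x) : MonotoneOn f (Icc a b) := by
  intro x hx y hy hxy
  refine image_le_of_deriv_right_le_deriv_boundary (a := x) (b := y) (f := fun _ ↦ f x)
    (f' := 0) continuousOn_const (fun _ _ ↦ hasDerivWithinAt_const _ _ _) le_rfl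
    (hf.mono (Icc_subset_Icc hx.1 hy.2))
    (fun z hz ↦ hf' z ⟨hx.1.trans hz.1, hz.2.trans_le hy.2⟩)
    (fun z hz ↦ hf'₀ z ⟨hx.1.trans hz.1, hz.2.trans_le hy.2⟩) (right_mem_Icc.2 hxy)

theorem antitoneOn_Ici_of_hasDerivWithinAt_Ici {f f' : ℝ → ℝ} {a : ℝ}
    (hf : ContinuousOn f (Ici a))
    (hf' : ∀ x ∈ Ici a, HasDerivWithinAt f (f' x) (Ici x) x)
    (hf'₀ : ∀ x ∈ Ici a, f' x ≤ 0) : AntitoneOn f (Ici a) := by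
  intro x hx y hy hxy
  have hsub : Icc x y ⊆ Ici a := fun z hz ↦ hx.trans hz.1
  have := monotoneOn_Icc_of_hasDerivWithinAt_Ici (f := -f) (f' := -f') (hf.mono hsub).neg
    (fun z hz ↦ (hf' z (hsub (Ico_subset_Icc_self hz))).neg)
    (fun z hz ↦ neg_nonneg.2 (hf'₀ z (hsub (Ico_subset_Icc_self hz))))
    (left_mem_Icc.2 hxy) (right_mem_Icc.2 hxy) hxy
  simpa using this

theorem integral_Ioi_of_hasDerivWithinAt_Ici_of_tendsto {f f' : ℝ → ℝ} {a m : ℝ}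
    (hf : ContinuousOn f (Ici a)) (hf' : ∀ x ∈ Ioi a, HasDerivWithinAt f (f' x) (Ici x) x)
    (hf'int : IntegrableOn f' (Ioi a)) (hlim : Tendsto f atTop (𝓝 m)) :
    ∫ x in Ioi a, f' x = m - f a := by
  refine tendsto_nhds_unique (intervalIntegral_tendsto_integral_Ioi a hf'int tendsto_id) ?_
  refine (hlim.sub_const _).congr' ?_
  filter_upwards [Ioi_mem_atTop a] with x hx
  rw [id, intervalIntegral.integral_eq_sub_of_hasDeriv_right_of_le hx.le
    (hf.mono Icc_subset_Ici_self) (fun y hy ↦ (hf' y hy.1).Ioi_of_Ici)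
    ((intervalIntegrable_iff_integrableOn_Ioc_of_le hx.le).2 (hf'int.mono_set Ioc_subset_Ioi_self))]

theorem hasDerivWithinAt_sub_pow_mul_ite (c : ℝ) (k : ℕ) (x : ℝ) :
    HasDerivWithinAt (fun y ↦ (y - c) ^ k * if c ≤ y then 1 else 0)
      (k * (x - c) ^ (k - 1) * if c ≤ x then 1 else 0) (Ici x) x := by
  rcases lt_or_ge x c with hx | hx
  · refine (hasDerivWithinAt_const x _ 0).congr_of_eventuallyEq ?_ ?_ |>.congr_deriv ?_
    · filter_upwards [mem_nhdsWithin_of_mem_nhds (Iio_mem_nhds hx)] with y hy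
      simp [not_le.2 (show y < c from hy)]
    · simp [not_le.2 hx]
    · simp [not_le.2 hx]
  · have := ((hasDerivAt_id x).sub_const c).pow k
    refine this.hasDerivWithinAt.congr (fun y hy ↦ ?_) ?_ |>.congr_deriv ?_
    · simp [hx.trans hy]
    · simp [hx]
    · simp [hx]

theorem continuous_sub_pow_succ_mul_ite (c : ℝ) (k : ℕ) :
    Continuous (fun y ↦ (y - c) ^ (k + 1) * if c ≤ y then 1 else 0) := by
  have : (fun y ↦ (y - c) ^ (k + 1) * if c ≤ y then (1 : ℝ) else 0) =
      fun y ↦ max (y - c) 0 ^ (k + 1) := by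
    ext y
    split_ifs with h
    · rw [max_eq_left (sub_nonneg.2 h), mul_one]
    · rw [max_eq_right (by linarith [not_le.1 h]), mul_zero, zero_pow (Nat.succ_ne_zero k)]
  rw [this]
  fun_prop

open Nat in
noncomputable def dexpTerm (μ τ : ℝ) (n : ℕ) (t : ℝ) : ℝ :=
  (-μ) ^ n * (t - n * τ) ^ n / n ! * (if (n : ℝ) * τ ≤ t then 1 else 0)

section DelayedExponential

variable {μ τ : ℝ}

theorem dexpTerm_of_lt {n : ℕ} {t : ℝ} (h : t < n * τ) : dexpTerm μ τ n t = 0 := by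
  simp [dexpTerm, not_le.2 h]

theorem dexp_eq_sum_range (hτ : 0 ≤ τ) {N : ℕ} {t : ℝ} (h : t < N * τ) :
    dexp μ τ t = ∑ n ∈ Finset.range N, dexpTerm μ τ n t := by
  refine tsum_eq_sum fun n hn ↦ dexpTerm_of_lt (h.trans_le ?_)
  gcongr
  exact_mod_cast not_lt.1 (Finset.mem_range.not.1 hn)

theorem dexp_eventuallyEq_sum_range (hτ : 0 ≤ τ) {N : ℕ} {t : ℝ} (h : t < N * τ) :
    dexp μ τ =ᶠ[𝓝 t] fun y ↦ ∑ n ∈ Finset.range N, dexpTerm μ τ n y := by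
  filter_upwards [Iio_mem_nhds h] with y hy using dexp_eq_sum_range hτ hy

theorem dexp_of_neg (hτ : 0 ≤ τ) {t : ℝ} (ht : t < 0) : dexp μ τ t = 0 := by
  simpa using dexp_eq_sum_range (N := 0) hτ (by simpa using ht)

theorem dexp_zero (hτ : 0 < τ) : dexp μ τ 0 = 1 := by
  simp [dexp_eq_sum_range (N := 1) hτ.le (by simpa using hτ), dexpTerm]

theorem dexpTerm_zero_eq : dexpTerm μ τ 0 = fun y ↦ if 0 ≤ y then 1 else 0 := by
  ext y; simp [dexpTerm]

theorem dexpTerm_succ_eq (n : ℕ) :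
    dexpTerm μ τ (n + 1) = fun y ↦ (-μ) ^ (n + 1) / (n + 1).factorial *
      ((y - (n + 1 : ℕ) * τ) ^ (n + 1) * if ((n + 1 : ℕ) : ℝ) * τ ≤ y then 1 else 0) := by
  ext y; simp only [dexpTerm]; ring

theorem hasDerivWithinAt_dexpTerm_zero (t : ℝ) :
    HasDerivWithinAt (dexpTerm μ τ 0) 0 (Ici t) t := by
  simpa [dexpTerm_zero_eq] using hasDerivWithinAt_sub_pow_mul_ite 0 0 t

theorem hasDerivWithinAt_dexpTerm_succ (n : ℕ) (t : ℝ) :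
    HasDerivWithinAt (dexpTerm μ τ (n + 1)) (-μ * dexpTerm μ τ n (t - τ)) (Ici t) t := by
  rw [dexpTerm_succ_eq]
  refine (hasDerivWithinAt_sub_pow_mul_ite _ (n + 1) t).const_mul _ |>.congr_deriv ?_
  have hshift : (n : ℝ) * τ ≤ t - τ ↔ (n + 1 : ℝ) * τ ≤ t := by
    constructor <;> intro h <;> linarith
  simp only [dexpTerm, Nat.factorial_succ, Nat.add_sub_cancel]
  push_cast
  simp only [hshift, show t - (n + 1) * τ = t - τ - n * τ by ring]
  field_simp
  ring

-- Only a right derivative: at `t = τ` the left derivative is `0`, as `dexp μ τ` jumps at `0`.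
theorem hasDerivWithinAt_dexp (hτ : 0 < τ) (t : ℝ) :
    HasDerivWithinAt (dexp μ τ) (-μ * dexp μ τ (t - τ)) (Ici t) t := by
  obtain ⟨N, hN⟩ := exists_lt_nsmul hτ t
  rw [nsmul_eq_mul] at hN
  have hsum := HasDerivWithinAt.fun_sum (u := Finset.range (N + 1)) (x := t) (s := Ici t)
    (A := fun n ↦ dexpTerm μ τ n)
    (A' := fun n ↦ if n = 0 then 0 else -μ * dexpTerm μ τ (n - 1) (t - τ)) fun n _ ↦ by
      cases n with
      | zero => simpa using hasDerivWithinAt_dexpTerm_zero t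
      | succ n => simpa using hasDerivWithinAt_dexpTerm_succ n t
  rw [Finset.sum_range_succ'] at hsum
  simp only [Nat.add_one_ne_zero, if_false, Nat.add_sub_cancel, if_true, add_zero,
    ← Finset.mul_sum, ← dexp_eq_sum_range hτ.le (show t - τ < N * τ by linarith)] at hsum
  exact hsum.congr_of_eventuallyEq
    (nhdsWithin_le_nhds (dexp_eventuallyEq_sum_range hτ.le (by push_cast; linarith)))
    (dexp_eq_sum_range hτ.le (by push_cast; linarith))

theorem continuousOn_dexpTerm (n : ℕ) : ContinuousOn (dexpTerm μ τ n) (Ici 0) := by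
  cases n with
  | zero =>
    rw [dexpTerm_zero_eq]
    exact (continuousOn_const (c := (1 : ℝ))).congr fun y (hy : 0 ≤ y) ↦ if_pos hy
  | succ n =>
    rw [dexpTerm_succ_eq]
    exact ((continuous_sub_pow_succ_mul_ite _ n).const_mul _).continuousOn

theorem continuousOn_dexp (hτ : 0 < τ) : ContinuousOn (dexp μ τ) (Ici 0) := by
  intro t _
  obtain ⟨N, hN⟩ := exists_lt_nsmul hτ t
  rw [nsmul_eq_mul] at hN
  refine ContinuousWithinAt.congr_of_eventuallyEq ?_
    (nhdsWithin_le_nhds (dexp_eventuallyEq_sum_range hτ.le hN)) (dexp_eq_sum_range hτ.le hN)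
  exact continuousOn_finsetSum _ (fun n _ ↦ continuousOn_dexpTerm n) t ‹_›

end DelayedExponential

theorem exists_nonneg_mul_exp_neg_mul_eq {μ τ : ℝ} (hμ : 0 ≤ μ) (hτ : 0 < τ)
    (hμτ : μ * τ < (exp 1)⁻¹) : ∃ r, 0 ≤ r ∧ r * exp (-(r * τ)) = μ := by
  have hcont : ContinuousOn (fun x ↦ x * exp (-(x * τ))) (Icc 0 τ⁻¹) := by fun_prop
  have hμ_le : μ ≤ τ⁻¹ * exp (-(τ⁻¹ * τ)) := by
    rw [inv_mul_cancel₀ hτ.ne', exp_neg, ← div_eq_inv_mul, le_div_iff₀ hτ]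
    exact hμτ.le
  obtain ⟨r, hr, hr_eq⟩ :=
    intermediate_value_Icc (inv_nonneg.2 hτ.le) hcont (by simpa using ⟨hμ, hμ_le⟩)
  exact ⟨r, hr.1, hr_eq⟩

section MethodOfSteps

variable {μ τ r : ℝ} (hτ : 0 < τ) (hr : 0 ≤ r) (hroot : r * exp (-(r * τ)) = μ)
include hτ hr hroot

/- With `G t = e^{rt} F t` and `c = G a`, the characteristic
equation turns `F' = -μ F(· - τ)` into `(F - c e^{-r·})' = r e^{-r·} (c - G(· - τ)) ≥ 0` on
`[a, a + τ]`, and `G = c + e^{r·} (F - c e^{-r·})` is then a product of nonnegative monotone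
functions plus a constant. -/
theorem monotoneOn_exp_mul_dexp_Icc_add {a : ℝ} (ha : 0 ≤ a)
    (hG : MonotoneOn (fun t ↦ exp (r * t) * dexp μ τ t) (Icc 0 a)) :
    MonotoneOn (fun t ↦ exp (r * t) * dexp μ τ t) (Icc a (a + τ)) := by
  set G := fun t ↦ exp (r * t) * dexp μ τ t
  set c := G a
  have hexp_neg : ∀ x, exp x * exp (-x) = 1 := fun x ↦ by rw [← exp_add, add_neg_cancel, exp_zero]
  have hc : 0 ≤ c := by
    have := hG (left_mem_Icc.2 ha) (right_mem_Icc.2 ha) ha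
    simp only [G, mul_zero, exp_zero, one_mul, dexp_zero hτ] at this
    exact zero_le_one.trans this
  have hpast : ∀ u ∈ Icc a (a + τ), G (u - τ) ≤ c := by
    intro u hu
    rcases lt_or_ge (u - τ) 0 with hneg | hnonneg
    · simpa [G, dexp_of_neg hτ.le hneg] using hc
    · exact hG ⟨hnonneg, by linarith [hu.2]⟩ (right_mem_Icc.2 ha) (by linarith [hu.2])
  have hdelay : ∀ u, μ * dexp μ τ (u - τ) = r * exp (-(r * u)) * G (u - τ) := by
    intro u
    have hexp : exp (-(r * u)) * exp (r * (u - τ)) = exp (-(r * τ)) := by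
      rw [← exp_add]; ring_nf
    simp only [G]
    linear_combination (dexp μ τ (u - τ)) * (-(r * hexp) - hroot)
  set V := fun u ↦ dexp μ τ u - c * exp (-(r * u))
  have hV : MonotoneOn V (Icc a (a + τ)) := by
    refine monotoneOn_Icc_of_hasDerivWithinAt_Ici
      (f' := fun u ↦ -μ * dexp μ τ (u - τ) - c * (exp (-(r * u)) * -r)) ?_ ?_ ?_
    · exact ((continuousOn_dexp hτ).mono fun u hu ↦ ha.trans hu.1).sub (by fun_prop)
    · intro u _
      exact (hasDerivWithinAt_dexp hτ u).sub <|
        (((hasDerivAt_id u).const_mul r).neg.exp.const_mul c).hasDerivWithinAt.congr_deriv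
          (by simp)
    · intro u hu
      have := hpast u (Ico_subset_Icc_self hu)
      rw [neg_mul, hdelay]
      nlinarith [exp_pos (-(r * u)), mul_nonneg hr (exp_pos (-(r * u))).le]
  have hVa : V a = 0 := by
    simp only [V, c, G]
    linear_combination -(dexp μ τ a) * hexp_neg (r * a)
  have hV_nonneg : ∀ u ∈ Icc a (a + τ), 0 ≤ V u := fun u hu ↦
    hVa ▸ hV (left_mem_Icc.2 (by linarith)) hu hu.1
  have hGV : EqOn G (fun u ↦ c + exp (r * u) * V u) (Icc a (a + τ)) := by
    intro u _
    simp only [G, V]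
    linear_combination c * hexp_neg (r * u)
  refine MonotoneOn.congr ?_ hGV.symm
  have hexp_mono : MonotoneOn (fun u ↦ exp (r * u)) (Icc a (a + τ)) :=
    fun x _ y _ hxy ↦ exp_le_exp.2 (mul_le_mul_of_nonneg_left hxy hr)
  exact (hexp_mono.mul hV (fun _ _ ↦ (exp_pos _).le) hV_nonneg).const_add c

theorem monotoneOn_exp_mul_dexp :
    MonotoneOn (fun t ↦ exp (r * t) * dexp μ τ t) (Ici 0) := by
  have hstep : ∀ n : ℕ, MonotoneOn (fun t ↦ exp (r * t) * dexp μ τ t) (Icc 0 (n * τ)) := by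
    intro n
    induction n with
    | zero => simp
    | succ n ih =>
      have hn : (0 : ℝ) ≤ n * τ := by positivity
      rw [Nat.cast_succ, add_one_mul, ← Icc_union_Icc_eq_Icc hn (by linarith)]
      exact ih.union_right (monotoneOn_exp_mul_dexp_Icc_add hτ hr hroot hn ih) (isGreatest_Icc hn)
        (isLeast_Icc (by linarith))
  intro x hx y hy hxy
  obtain ⟨N, hN⟩ := exists_lt_nsmul hτ y
  rw [nsmul_eq_mul] at hN
  exact hstep N ⟨hx, hxy.trans hN.le⟩ ⟨hy, hN.le⟩ hxy

end MethodOfSteps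

section Decay

variable {μ τ : ℝ} (hμ : 0 < μ) (hτ : 0 < τ) (hμτ : μ * τ < (exp 1)⁻¹)
include hμ hτ hμτ

theorem dexp_nonneg (t : ℝ) : 0 ≤ dexp μ τ t := by
  rcases lt_or_ge t 0 with ht | ht
  · rw [dexp_of_neg hτ.le ht]
  obtain ⟨r, hr, hroot⟩ := exists_nonneg_mul_exp_neg_mul_eq hμ.le hτ hμτ
  have := monotoneOn_exp_mul_dexp hτ hr hroot self_mem_Ici ht ht
  simp only [mul_zero, exp_zero, one_mul, dexp_zero hτ] at this
  nlinarith [exp_pos (r * t)]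

theorem dexp_antitoneOn : AntitoneOn (dexp μ τ) (Ici 0) :=
  antitoneOn_Ici_of_hasDerivWithinAt_Ici (continuousOn_dexp hτ)
    (fun t _ ↦ hasDerivWithinAt_dexp hτ t)
    (fun t _ ↦ by nlinarith [dexp_nonneg hμ hτ hμτ (t - τ)])

theorem dexp_le_exp {t : ℝ} (ht : 0 ≤ t) : dexp μ τ t ≤ exp (μ * (τ - t)) := by
  have hF_le_one : ∀ u, 0 ≤ u → dexp μ τ u ≤ 1 := fun u hu ↦
    dexp_zero (μ := μ) hτ ▸ dexp_antitoneOn hμ hτ hμτ self_mem_Ici hu hu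
  rcases le_total t τ with htτ | hτt
  · exact (hF_le_one t ht).trans (one_le_exp (by nlinarith))
  have hW : AntitoneOn (fun t ↦ exp (μ * t) * dexp μ τ t) (Ici τ) := by
    refine antitoneOn_Ici_of_hasDerivWithinAt_Ici ?_
      (fun t _ ↦ ((hasDerivAt_id t).const_mul μ).exp.hasDerivWithinAt.mul
        (hasDerivWithinAt_dexp hτ t))
      fun t (ht : τ ≤ t) ↦ ?_
    · exact (continuous_exp.comp (continuous_const.mul continuous_id)).continuousOn.mul
        ((continuousOn_dexp hτ).mono fun _ hu ↦ hτ.le.trans hu)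
    · have := dexp_antitoneOn hμ hτ hμτ (show 0 ≤ t - τ by linarith) (hτ.le.trans ht)
        (by linarith)
      simp only [id, mul_one]
      nlinarith [mul_nonneg (mul_pos (exp_pos (μ * t)) hμ).le (sub_nonneg.2 this)]
  have := hW self_mem_Ici hτt hτt
  rw [mul_sub, exp_sub, le_div_iff₀ (exp_pos _)]
  nlinarith [hF_le_one τ hτ.le, exp_pos (μ * τ)]

end Decay

section MomentGeneratingFunction

variable {μ τ : ℝ}

theorem exp_mul_delay_eq (s t : ℝ) : exp (s * t) * (μ * dexp μ τ (t - τ)) =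
    μ * exp (s * τ) * (exp (s * (t - τ)) * dexp μ τ (t - τ)) := by
  rw [show s * t = s * τ + s * (t - τ) by ring, exp_add]
  ring

theorem setIntegral_exp_mul_delay (hτ : 0 < τ) (s : ℝ) :
    ∫ t in Ioi 0, exp (s * t) * (μ * dexp μ τ (t - τ)) =
      μ * exp (s * τ) * ∫ t in Ioi 0, exp (s * t) * dexp μ τ t := by
  calc ∫ t in Ioi 0, exp (s * t) * (μ * dexp μ τ (t - τ))
      = ∫ t, μ * exp (s * τ) * (exp (s * (t - τ)) * dexp μ τ (t - τ)) := by
        rw [setIntegral_eq_integral_of_forall_compl_eq_zero (s := Ioi 0) fun t ht ↦ by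
          rw [dexp_of_neg hτ.le (by linarith [notMem_Ioi.1 ht]), mul_zero, mul_zero]]
        simp only [exp_mul_delay_eq]
    _ = μ * exp (s * τ) * ∫ t, exp (s * t) * dexp μ τ t := by
        rw [integral_const_mul, integral_sub_right_eq_self (fun t ↦ exp (s * t) * dexp μ τ t)]
    _ = μ * exp (s * τ) * ∫ t in Ioi 0, exp (s * t) * dexp μ τ t := by
        rw [← integral_Ici_eq_integral_Ioi, setIntegral_eq_integral_of_forall_compl_eq_zero
          (s := Ici 0) fun t ht ↦ by rw [dexp_of_neg hτ.le (notMem_Ici.1 ht), mul_zero]]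

variable (hμ : 0 < μ) (hτ : 0 < τ) (hμτ : μ * τ < (exp 1)⁻¹) {s : ℝ}
include hμ hτ hμτ

theorem norm_exp_mul_dexp_le {t : ℝ} (ht : 0 ≤ t) :
    ‖exp (s * t) * dexp μ τ t‖ ≤ exp (μ * τ) * exp (-(μ - s) * t) := by
  rw [Real.norm_of_nonneg (mul_nonneg (exp_pos _).le (dexp_nonneg hμ hτ hμτ t)),
    ← exp_add, show μ * τ + -(μ - s) * t = s * t + μ * (τ - t) by ring, exp_add]
  exact mul_le_mul_of_nonneg_left (dexp_le_exp hμ hτ hμτ ht) (exp_pos _).le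

theorem integrable_exp_mul_dexp (hs : s < μ) :
    Integrable (fun t ↦ exp (s * t) * dexp μ τ t) := by
  rw [← integrableOn_iff_integrable_of_support_subset (s := Ici 0) fun t ht ↦ not_lt.1 fun h ↦
    ht (by rw [dexp_of_neg hτ.le h, mul_zero]), integrableOn_Ici_iff_integrableOn_Ioi]
  refine ((exp_neg_integrableOn_Ioi 0 (sub_pos.2 hs)).const_mul (exp (μ * τ))).mono' ?_ ?_
  · exact ((continuous_exp.comp (continuous_const.mul continuous_id)).continuousOn.mul
      (continuousOn_dexp hτ)).mono Ioi_subset_Ici_self |>.aestronglyMeasurable measurableSet_Ioi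
  · filter_upwards [ae_restrict_mem measurableSet_Ioi] with t ht
    exact norm_exp_mul_dexp_le hμ hτ hμτ (le_of_lt ht)

theorem tendsto_exp_mul_dexp_atTop (hs : s < μ) :
    Tendsto (fun t ↦ exp (s * t) * dexp μ τ t) atTop (𝓝 0) := by
  have hdecay : Tendsto (fun t ↦ exp (μ * τ) * exp (-(μ - s) * t)) atTop (𝓝 0) := by
    simpa using (tendsto_exp_atBot.comp <| tendsto_id.const_mul_atTop_of_neg
      (neg_lt_zero.2 (sub_pos.2 hs))).const_mul (exp (μ * τ))
  refine squeeze_zero_norm' ?_ hdecay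
  filter_upwards [eventually_ge_atTop 0] with t ht using norm_exp_mul_dexp_le hμ hτ hμτ ht

theorem setIntegral_exp_mul_delay_eq_one_add (hs : s < μ) :
    ∫ t in Ioi 0, exp (s * t) * (μ * dexp μ τ (t - τ)) =
      1 + s * ∫ t in Ioi 0, exp (s * t) * dexp μ τ t := by
  have hh := integrable_exp_mul_dexp hμ hτ hμτ hs
  have hg : Integrable (fun t ↦ exp (s * t) * (μ * dexp μ τ (t - τ))) := by
    simpa only [exp_mul_delay_eq] using (hh.comp_sub_right τ).const_mul (μ * exp (s * τ))
  have hFTC := integral_Ioi_of_hasDerivWithinAt_Ici_of_tendsto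
    (f := fun t ↦ exp (s * t) * dexp μ τ t)
    (f' := fun t ↦ s * (exp (s * t) * dexp μ τ t) - exp (s * t) * (μ * dexp μ τ (t - τ)))
    ((continuous_exp.comp (continuous_const.mul continuous_id)).continuousOn.mul
      (continuousOn_dexp hτ))
    (fun t _ ↦ (((hasDerivAt_id t).const_mul s).exp.hasDerivWithinAt.mul
      (hasDerivWithinAt_dexp hτ t)).congr_deriv (by simp only [id]; ring))
    ((hh.const_mul s).sub hg).integrableOn (tendsto_exp_mul_dexp_atTop hμ hτ hμτ hs)
  rw [integral_sub (hh.const_mul s).integrableOn hg.integrableOn, integral_const_mul,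
    mul_zero, exp_zero, one_mul, dexp_zero hτ] at hFTC
  linarith

end MomentGeneratingFunction

/-- For `0 < μτ < 1/e`, the moment generating function of the delay exponential
distribution (with density `ψ(t) = μ dexp(-μ(t-τ); -μτ)` on `[0, ∞)`) equals
`1/(1 - μ⁻¹ s e^{-sτ})` for all `s` in a neighbourhood of `0`. -/
theorem dexp_mgf (μ τ : ℝ) (hμ : 0 < μ) (hτ : 0 < τ)
    (hμτ : μ * τ < (Real.exp 1)⁻¹) :
    ∃ ε > (0 : ℝ), ∀ s : ℝ, |s| < ε →
      ∫ t in Ioi (0 : ℝ), Real.exp (s * t) * (μ * dexp μ τ (t - τ))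
        = 1 / (1 - μ⁻¹ * s * Real.exp (-s * τ)) := by
  refine ⟨μ, hμ, fun s hs ↦ ?_⟩
  have hshift := setIntegral_exp_mul_delay (μ := μ) hτ s
  have hparts := setIntegral_exp_mul_delay_eq_one_add hμ hτ hμτ (abs_lt.1 hs).2
  generalize ∫ t in Ioi 0, exp (s * t) * (μ * dexp μ τ (t - τ)) = I at hshift hparts ⊢
  generalize ∫ t in Ioi 0, exp (s * t) * dexp μ τ t = L at hshift hparts
  subst hshift
  refine eq_one_div_of_mul_eq_one_right ?_
  rw [neg_mul, exp_neg]
  field_simp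
  linear_combination hparts
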